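/- Let q ≥ 1 be an integer, α > 0, and let n_1, ..., n_q be non-negative integers with n = ∑_k n_k > 0 and m = #{k : n_k > 0}. Then -log pGam(α, n) + ∑_{k=1}^q log pGam(α/q, n_k) ≤ -m·log q. -/

import Mathlib

/-- `pGam α x = Γ(x+α)/Γ(α)`. -/
noncomputable def pGam (α : ℝ) (x : ℕ) : ℝ := Real.Gamma (x + α) / Real.Gamma α

/-!
For `α > 0`, `pGam α x = α (α + 1) ⋯ (α + x - 1)` is a rising factorial. Since
`α + a + i ≥ α + i`, rising factorials are supermultiplicative in `x`, which gives
`∏ₖ pGam α nₖ ≤ pGam α n`. Replacing `α` by `α / q` only shrinks every factor, and the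
first factor by exactly `q`, so each nonzero count satisfies `q · pGam (α / q) nₖ ≤ pGam α nₖ`.
Taking logarithms, each of the `m` nonzero counts contributes `-log q`.
-/

open Finset Real

lemma pGam_eq_prod_range {α : ℝ} (hα : 0 < α) (x : ℕ) :
    pGam α x = ∏ i ∈ range x, ((i : ℝ) + α) := by
  induction x with
  | zero => simp [pGam, div_self (Gamma_pos_of_pos hα).ne']
  | succ m ih =>
    have hshift : ((m + 1 : ℕ) : ℝ) + α = ((m : ℝ) + α) + 1 := by push_cast; ring
    rw [prod_range_succ, ← ih, pGam, pGam, hshift, Gamma_add_one (by positivity)]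
    ring

lemma pGam_zero {α : ℝ} (hα : 0 < α) : pGam α 0 = 1 := by
  simp [pGam_eq_prod_range hα]

lemma pGam_pos {α : ℝ} (hα : 0 < α) (x : ℕ) : 0 < pGam α x := by
  rw [pGam_eq_prod_range hα]
  exact prod_pos fun i _ => by positivity

lemma pGam_mul_pGam_le_pGam_add {α : ℝ} (hα : 0 < α) (a b : ℕ) :
    pGam α a * pGam α b ≤ pGam α (a + b) := by
  rw [pGam_eq_prod_range hα, pGam_eq_prod_range hα, pGam_eq_prod_range hα, prod_range_add]
  gcongr with i
  linarith [(a.cast_nonneg : (0 : ℝ) ≤ a)]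

lemma prod_pGam_le_pGam_sum {ι : Type*} {α : ℝ} (hα : 0 < α) (s : Finset ι) (n : ι → ℕ) :
    ∏ k ∈ s, pGam α (n k) ≤ pGam α (∑ k ∈ s, n k) := by
  classical
  induction s using Finset.induction with
  | empty => simp [pGam_zero hα]
  | insert a s ha ih =>
    rw [prod_insert ha, sum_insert ha]
    calc pGam α (n a) * ∏ k ∈ s, pGam α (n k)
        ≤ pGam α (n a) * pGam α (∑ k ∈ s, n k) := by gcongr; exact (pGam_pos hα _).le
      _ ≤ pGam α (n a + ∑ k ∈ s, n k) := pGam_mul_pGam_le_pGam_add hα _ _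

lemma sum_log_pGam_le_log_pGam_sum {ι : Type*} {α : ℝ} (hα : 0 < α) (s : Finset ι)
    (n : ι → ℕ) : ∑ k ∈ s, log (pGam α (n k)) ≤ log (pGam α (∑ k ∈ s, n k)) := by
  rw [← log_prod fun k _ => (pGam_pos hα _).ne']
  exact log_le_log (prod_pos fun k _ => pGam_pos hα _) (prod_pGam_le_pGam_sum hα s n)

lemma mul_pGam_div_le_pGam {α c : ℝ} (hα : 0 < α) (hc : 1 ≤ c) {x : ℕ} (hx : x ≠ 0) :
    c * pGam (α / c) x ≤ pGam α x := by
  obtain ⟨m, rfl⟩ := Nat.exists_eq_succ_of_ne_zero hx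
  have hc₀ : 0 < c := by linarith
  have hαc : α / c ≤ α := div_le_self hα.le hc
  rw [pGam_eq_prod_range (by positivity), pGam_eq_prod_range hα, prod_range_succ',
    prod_range_succ', Nat.cast_zero, zero_add, zero_add, mul_left_comm,
    mul_div_cancel₀ α hc₀.ne']
  gcongr

lemma log_pGam_div_le_log_pGam_sub_log {α c : ℝ} (hα : 0 < α) (hc : 1 ≤ c) {x : ℕ}
    (hx : x ≠ 0) : log (pGam (α / c) x) ≤ log (pGam α x) - log c := by
  have hc₀ : 0 < c := by linarith
  rw [le_sub_iff_add_le, ← log_mul (pGam_pos (by positivity) x).ne' hc₀.ne', mul_comm]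
  exact log_le_log (mul_pos hc₀ (pGam_pos (by positivity) x)) (mul_pGam_div_le_pGam hα hc hx)

theorem stmt_8_general (q : ℕ) (α : ℝ) (hα : 0 < α) (n : ℕ → ℕ) :
    -Real.log (pGam α (∑ k ∈ Finset.range q, n k)) +
        ∑ k ∈ Finset.range q, Real.log (pGam (α / q) (n k))
      ≤ -(((Finset.range q).filter fun k => 0 < n k).card : ℝ) * Real.log q := by
  have hterm : ∀ k ∈ range q, log (pGam (α / q) (n k)) ≤
      log (pGam α (n k)) - if 0 < n k then log q else 0 := by
    intro k hk
    have hq : (1 : ℝ) ≤ q := Nat.one_le_cast.2 (Nat.one_le_of_lt (mem_range.1 hk))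
    split_ifs with hnk
    · exact log_pGam_div_le_log_pGam_sub_log hα hq hnk.ne'
    · rw [Nat.eq_zero_of_not_pos hnk, pGam_zero hα, pGam_zero (by positivity)]
      simp
  have hcount : ∑ k ∈ range q, (if 0 < n k then log q else 0) =
      ((range q).filter fun k => 0 < n k).card * log q := by
    rw [← sum_filter, sum_const, nsmul_eq_mul]
  calc _ ≤ -log (pGam α (∑ k ∈ range q, n k)) +
          ∑ k ∈ range q, (log (pGam α (n k)) - if 0 < n k then log q else 0) := by
        gcongr with k hk
        exact hterm k hk
    _ ≤ _ := by
        rw [sum_sub_distrib, hcount]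
        linarith [sum_log_pGam_le_log_pGam_sum hα (range q) n]

theorem stmt_8 (q : ℕ) (hq : 1 ≤ q) (α : ℝ) (hα : 0 < α) (n : ℕ → ℕ)
    (hN : 0 < ∑ k ∈ Finset.range q, n k) :
    -Real.log (pGam α (∑ k ∈ Finset.range q, n k)) +
        ∑ k ∈ Finset.range q, Real.log (pGam (α / q) (n k))
      ≤ -(((Finset.range q).filter fun k => 0 < n k).card : ℝ) * Real.log q :=
  stmt_8_general q α hα n
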